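/- The two-element null semigroup N₂ does not lift: there is a finite semigroup S and a surjective semigroup homomorphism φ : S → N₂ such that no subsemigroup of S is isomorphic to N₂. Concretely, one may take S to be the monogenic semigroup ⟨y | y² = y⁴⟩ (elements y, y², y³ with y⁴ = y²) with φ(y) = n, φ(y²) = φ(y³) = 0, where N₂ = {n, 0} with all products equal to 0. -/

import Mathlib

/-- The two-element null semigroup `N₂ = {n, 0}`, all products equal to `0`. -/
inductive N2 : Type
  | n : N2
  | zero : N2
deriving DecidableEq

instance : Fintype N2 where
  elems := {N2.n, N2.zero}
  complete := by intro x; cases x <;> simp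

instance : Mul N2 := ⟨fun _ _ => N2.zero⟩

instance : Semigroup N2 where
  mul_assoc _ _ _ := rfl

/-- The monogenic semigroup `⟨y ∣ y² = y⁴⟩` with elements `y, y², y³`. -/
inductive M3 : Type
  | y : M3
  | y2 : M3
  | y3 : M3
deriving DecidableEq

instance : Fintype M3 where
  elems := {M3.y, M3.y2, M3.y3}
  complete := by intro x; cases x <;> simp

instance : Mul M3 :=
  ⟨fun a b =>
    match a, b with
    | M3.y, M3.y => M3.y2
    | M3.y, M3.y2 => M3.y3
    | M3.y, M3.y3 => M3.y2
    | M3.y2, M3.y => M3.y3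
    | M3.y2, M3.y2 => M3.y2
    | M3.y2, M3.y3 => M3.y3
    | M3.y3, M3.y => M3.y2
    | M3.y3, M3.y2 => M3.y3
    | M3.y3, M3.y3 => M3.y2⟩

instance : Semigroup M3 where
  mul_assoc := by decide

/-- Associativity forces `z * z = z * a = z`, so `{a, z}` is then a copy of `N₂`. -/
def IsNullPair {S : Type*} [Mul S] (a z : S) : Prop :=
  a ≠ z ∧ a * a = z ∧ a * z = z

theorem IsNullPair.map {S S' : Type*} [Mul S] [Mul S'] {a z : S} (h : IsNullPair a z)
    (f : S →ₙ* S') (hf : Function.Injective f) : IsNullPair (f a) (f z) :=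
  ⟨hf.ne h.1, by rw [← map_mul, h.2.1], by rw [← map_mul, h.2.2]⟩

theorem N2.isNullPair : IsNullPair N2.n N2.zero :=
  ⟨nofun, rfl, rfl⟩

/-- Such a `z` is idempotent, and the only idempotent of `M3` is `y²`; but
`y * y² = y³ * y² = y³`, so no `a ≠ y²` satisfies `a * y² = y²`. -/
theorem M3.not_isNullPair (a z : M3) : ¬ IsNullPair a z := by
  revert a z
  unfold IsNullPair
  decide

def M3.toN2 : M3 →ₙ* N2 where
  toFun
    | M3.y => N2.n
    | M3.y2 => N2.zero
    | M3.y3 => N2.zero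
  map_mul' := by decide

theorem M3.toN2_surjective : Function.Surjective M3.toN2 := by
  decide

/-- `N₂` does not lift: there is a surjective homomorphism from the finite semigroup
`⟨y ∣ y² = y⁴⟩` onto `N₂` (sending `y ↦ n` and `y², y³ ↦ 0`) whose domain has no
subsemigroup isomorphic to `N₂`. -/
theorem N2_does_not_lift :
    Finite M3 ∧
      ∃ φ : M3 →ₙ* N2,
        (φ M3.y = N2.n ∧ φ M3.y2 = N2.zero ∧ φ M3.y3 = N2.zero) ∧
        Function.Surjective φ ∧
        ∀ T : Subsemigroup M3, ¬ Nonempty (T ≃* N2) := by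
  refine ⟨inferInstance, M3.toN2, ⟨rfl, rfl, rfl⟩, M3.toN2_surjective, ?_⟩
  rintro T ⟨e⟩
  have hinj : Function.Injective ((MulMemClass.subtype T).comp e.symm.toMulHom) :=
    (MulMemClass.subtype_injective T).comp e.symm.injective
  exact M3.not_isNullPair _ _ (N2.isNullPair.map _ hinj)
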